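/- arXiv:1507.05307 — 2 statements merged into one kernel-verified Lean document; each statement's English description precedes it below -/
import Mathlib

section
/- Let H be a concept class over X with VCdim(H) ≤ 1, f ∈ H, and suppose for every x ∈ X there exists h ∈ H with h(x) ≠ f(x), and for all distinct x, y there is h ∈ H with h(x) ≠ h(y). Define x ≤ y iff for all h ∈ H, h(y) ≠ f(y) implies h(x) ≠ f(x). Then ≤ is a tree ordering: for every x, the set {y : y ≤ x} is linearly ordered by ≤. -/
/-!
If `y` and `z` are incomparable, some `h₁ ∈ H` moves `z` away from `f` but not `y`, and some
`h₂ ∈ H` does the opposite. If both lie below `x`, any `h₃ ∈ H` moving `x` away from `f` moves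
both `y` and `z`. Together with `f` itself, this realizes every agreement pattern with `f` on
`{y, z}`, and since labels are boolean, every labeling: `H` would shatter `{y, z}`.
-/

/-- `H` (a class of boolean functions) shatters `A` if every labeling of `A` is realized. -/
def FnShatters {X : Type*} (H : Set (X → Bool)) (A : Set X) : Prop :=
  ∀ g : X → Bool, ∃ h ∈ H, ∀ a ∈ A, h a = g a

theorem Bool.eq_of_eq_iff_eq : ∀ {a b c : Bool}, (a = c ↔ b = c) → a = b := by decide

section

variable {X : Type*} {H : Set (X → Bool)} {f : X → Bool}

theorem fnShatters_pair_of_agreement_patterns {y z : X}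
    (hpat : ∀ p q : Prop, ∃ h ∈ H, (h y = f y ↔ p) ∧ (h z = f z ↔ q)) :
    FnShatters H {y, z} := by
  intro g
  obtain ⟨h, hH, hy, hz⟩ := hpat (g y = f y) (g z = f z)
  refine ⟨h, hH, ?_⟩
  rintro a (rfl | rfl)
  exacts [Bool.eq_of_eq_iff_eq hy, Bool.eq_of_eq_iff_eq hz]

theorem disagreement_sets_comparable_of_subset (hf : f ∈ H)
    (hvc : ∀ x y : X, x ≠ y → ¬ FnShatters H {x, y}) (hnc : ∀ x : X, ∃ h ∈ H, h x ≠ f x)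
    {x y z : X} (hyx : ∀ h ∈ H, h x ≠ f x → h y ≠ f y) (hzx : ∀ h ∈ H, h x ≠ f x → h z ≠ f z) :
    (∀ h ∈ H, h z ≠ f z → h y ≠ f y) ∨ (∀ h ∈ H, h y ≠ f y → h z ≠ f z) := by
  by_contra! hincomp
  obtain ⟨⟨h₁, h₁H, h₁z, h₁y⟩, ⟨h₂, h₂H, h₂y, h₂z⟩⟩ := hincomp
  have hyz : y ≠ z := by rintro rfl; exact h₁z h₁y
  obtain ⟨h₃, h₃H, h₃x⟩ := hnc x
  refine hvc y z hyz (fnShatters_pair_of_agreement_patterns (f := f) fun p q => ?_)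
  by_cases hp : p <;> by_cases hq : q
  · exact ⟨f, hf, by simp [hp, hq]⟩
  · exact ⟨h₁, h₁H, by simp [hp, hq, h₁y, h₁z]⟩
  · exact ⟨h₂, h₂H, by simp [hp, hq, h₂y, h₂z]⟩
  · exact ⟨h₃, h₃H, by simp [hp, hq, hyx h₃ h₃H h₃x, hzx h₃ h₃H h₃x]⟩

end

theorem stmt_3_general {X : Type*} (H : Set (X → Bool)) (f : X → Bool) (hf : f ∈ H)
    (hvc : ∀ x y : X, x ≠ y → ¬ FnShatters H {x, y})
    (hnc : ∀ x : X, ∃ h ∈ H, h x ≠ f x)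
    (le : X → X → Prop)
    (hle : ∀ x y, le x y ↔ ∀ h ∈ H, h y ≠ f y → h x ≠ f x) :
    ∀ x y z : X, le y x → le z x → le y z ∨ le z y := by
  intro x y z hyx hzx
  simp only [hle] at hyx hzx ⊢
  exact disagreement_sets_comparable_of_subset hf hvc hnc hyx hzx

/-- If `VCdim H ≤ 1`, `f ∈ H`, no point is labeled constantly by `H` relative to `f`,
and `H` separates points, then the order `x ≤ y ↔ ∀ h ∈ H, h y ≠ f y → h x ≠ f x`
is a tree ordering: every initial segment `{y : y ≤ x}` is linearly ordered. -/
theorem stmt_3 {X : Type*} (H : Set (X → Bool)) (f : X → Bool) (hf : f ∈ H)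
    (hvc : ∀ x y : X, x ≠ y → ¬ FnShatters H {x, y})
    (hnc : ∀ x : X, ∃ h ∈ H, h x ≠ f x)
    (hsep : ∀ x y : X, x ≠ y → ∃ h ∈ H, h x ≠ h y)
    (le : X → X → Prop)
    (hle : ∀ x y, le x y ↔ ∀ h ∈ H, h y ≠ f y → h x ≠ f x) :
    ∀ x y z : X, le y x → le z x → le y z ∨ le z y :=
  stmt_3_general H f hf hvc hnc le hle
end

section
/- If H has VC dimension at most 1 and every h ∈ H is an initial segment with respect to a tree ordering obtained as in the structure theorem, then H admits an unlabeled sample compression scheme of size 1: there exist functions F mapping each H-realizable labeled sample to at most one unlabeled point of the sample, and G mapping such compressed outputs to hypotheses, such that G(F(S)) correctly labels every example of S. -/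
/-!
Order the points of `X` by reverse inclusion of their disagreement sets
`D x = {h ∈ H | h x ≠ f x}`. Since `f ∈ H` and no pair of points is shattered, the points at
which a single `h ∈ H` disagrees with `f` form a chain in this order, so `h` disagrees with `f`
on a sample exactly at the sample points lying below the top-most such point `x`. Compressing the
sample to `{x}` and reconstructing by flipping `f` below `x` recovers every label.
-/

section

variable {X : Type*} {H : Set (X → Bool)} {f : X → Bool}

variable (H f) in
def disagreementSet (x : X) : Set (X → Bool) :=
  {h ∈ H | h x ≠ f x}

open Classical in
variable (H f) in
noncomputable def reconstruct (s : Finset X) (y : X) : Bool :=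
  if ∃ x ∈ s, disagreementSet H f x ⊆ disagreementSet H f y then !f y else f y

theorem fnShatters_pair_of_forall {a b : X}
    (hab : ∀ u v : Bool, ∃ h ∈ H, h a = u ∧ h b = v) : FnShatters H {a, b} := by
  intro g
  obtain ⟨h, hH, ha, hb⟩ := hab (g a) (g b)
  refine ⟨h, hH, ?_⟩
  rintro z (rfl | rfl)
  exacts [ha, hb]

theorem disagreementSet_total (hf : f ∈ H) (hvc : ∀ x y : X, x ≠ y → ¬ FnShatters H {x, y})
    {h : X → Bool} (hH : h ∈ H) {a b : X} (ha : h a ≠ f a) (hb : h b ≠ f b) :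
    disagreementSet H f a ⊆ disagreementSet H f b ∨
      disagreementSet H f b ⊆ disagreementSet H f a := by
  by_cases hab : a = b
  · subst hab
    exact Or.inl subset_rfl
  by_contra! hne
  obtain ⟨⟨g₁, ⟨hg₁, hg₁a⟩, hg₁b⟩, ⟨g₂, ⟨hg₂, hg₂b⟩, hg₂a⟩⟩ :=
    hne.imp Set.not_subset.1 Set.not_subset.1
  simp only [disagreementSet, Set.mem_ofPred_eq, not_and, not_not] at hg₁b hg₂a
  rw [← Bool.eq_not] at ha hb hg₁a hg₂b
  refine hvc a b hab (fnShatters_pair_of_forall fun u v => ?_)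
  obtain rfl | rfl := Bool.eq_or_eq_not u (f a) <;> obtain rfl | rfl := Bool.eq_or_eq_not v (f b)
  · exact ⟨f, hf, rfl, rfl⟩
  · exact ⟨g₂, hg₂, hg₂a hg₂, hg₂b⟩
  · exact ⟨g₁, hg₁, hg₁a, hg₁b hg₁⟩
  · exact ⟨h, hH, ha, hb⟩

theorem reconstruct_empty (y : X) : reconstruct H f ∅ y = f y := by
  simp [reconstruct]

open Classical in
theorem reconstruct_singleton (x y : X) :
    reconstruct H f {x} y =
      if disagreementSet H f x ⊆ disagreementSet H f y then !f y else f y := by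
  simp [reconstruct]

theorem exists_compression (hf : f ∈ H) (hvc : ∀ x y : X, x ≠ y → ¬ FnShatters H {x, y})
    {S : List (X × Bool)} {h : X → Bool} (hH : h ∈ H) (hS : ∀ p ∈ S, h p.1 = p.2) :
    ∃ s : Finset X, s.card ≤ 1 ∧ (∀ x ∈ s, ∃ y, (x, y) ∈ S) ∧
      ∀ p ∈ S, reconstruct H f s p.1 = p.2 := by
  by_cases hagree : ∀ p ∈ S, h p.1 = f p.1
  · refine ⟨∅, by simp, by simp, fun p hp => ?_⟩
    rw [reconstruct_empty, ← hS p hp, hagree p hp]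
  push Not at hagree
  set D : Set (X × Bool) := {p | p ∈ S ∧ h p.1 ≠ f p.1}
  have hD : D.Finite := S.finite_toSet.subset fun p hp => hp.1
  obtain ⟨q, ⟨hqS, hqh⟩, hqmin⟩ :=
    hD.exists_minimalFor (fun p => disagreementSet H f p.1) D hagree
  have hq_le : ∀ p ∈ S, h p.1 ≠ f p.1 →
      disagreementSet H f q.1 ⊆ disagreementSet H f p.1 :=
    fun p hp hph => (disagreementSet_total hf hvc hH hqh hph).elim id (hqmin ⟨hp, hph⟩)
  refine ⟨{q.1}, by simp, fun x hx => by rw [Finset.mem_singleton.1 hx]; exact ⟨q.2, hqS⟩,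
    fun p hp => ?_⟩
  rw [reconstruct_singleton, ← hS p hp]
  split_ifs with hle
  · exact (Bool.eq_not.2 (hle ⟨hH, hqh⟩).2).symm
  · by_contra hph
    exact hle (hq_le p hp (Ne.symm hph))

end

theorem stmt_7_general {X : Type*} (H : Set (X → Bool)) (f : X → Bool) (hf : f ∈ H)
    (hvc : ∀ x y : X, x ≠ y → ¬ FnShatters H {x, y}) :
    ∃ (F : List (X × Bool) → Finset X) (G : Finset X → X → Bool),
      ∀ S : List (X × Bool), (∃ h ∈ H, ∀ p ∈ S, h p.1 = p.2) →
        (F S).card ≤ 1 ∧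
        (∀ x ∈ F S, ∃ y, (x, y) ∈ S) ∧
        (∀ p ∈ S, G (F S) p.1 = p.2) := by
  classical
  have hcompress : ∀ S : List (X × Bool), (∃ h ∈ H, ∀ p ∈ S, h p.1 = p.2) →
      ∃ s : Finset X, s.card ≤ 1 ∧ (∀ x ∈ s, ∃ y, (x, y) ∈ S) ∧
        ∀ p ∈ S, reconstruct H f s p.1 = p.2 :=
    fun S ⟨h, hH, hS⟩ => exists_compression hf hvc hH hS
  refine ⟨fun S => if hS : _ then (hcompress S hS).choose else ∅, reconstruct H f,
    fun S hS => ?_⟩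
  simpa only [dif_pos hS] using (hcompress S hS).choose_spec

/-- Every class of VC dimension at most 1, structured as in the structure theorem
(with `f ∈ H` and a tree ordering for which every `f`-representation of a member of `H`
is an initial segment), admits an unlabeled sample compression scheme of size 1:
`F` maps each `H`-realizable labeled sample to at most one unlabeled point occurring in
the sample, and `G` reconstructs a hypothesis that labels every example of the sample
correctly. -/
theorem stmt_7 {X : Type*} (H : Set (X → Bool)) (f : X → Bool) (hf : f ∈ H)
    (hvc : ∀ x y : X, x ≠ y → ¬ FnShatters H {x, y})
    (r : X → X → Prop) (hpo : IsPartialOrder X r)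
    (htree : ∀ x y z : X, r y x → r z x → r y z ∨ r z y)
    (hseg : ∀ h ∈ H, ∀ x y : X, r x y → h y ≠ f y → h x ≠ f x) :
    ∃ (F : List (X × Bool) → Finset X) (G : Finset X → X → Bool),
      ∀ S : List (X × Bool), (∃ h ∈ H, ∀ p ∈ S, h p.1 = p.2) →
        (F S).card ≤ 1 ∧
        (∀ x ∈ F S, ∃ y, (x, y) ∈ S) ∧
        (∀ p ∈ S, G (F S) p.1 = p.2) :=
  stmt_7_general H f hf hvc
end
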